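/- arXiv:1907.09098 — 2 statements merged into one kernel-verified Lean document; each statement's English description precedes it below -/
import Mathlib

section
/- Every reflexive relational model is equivalent to a single-evidence-state evidence model: given a reflexive relation R on X, define I_e(x) = {y : x R y} for a single evidence state e. Then (E1) holds, U_e = X, and for every formula φ of the language with modalities E and K and every x ∈ X, x satisfies φ in the relational model (with E as the R-box and K the universal modality) iff (x,e) satisfies φ in the evidence model. -/
/-- Formulas of the bimodal language with atoms, ¬, ∧, E, K. -/
inductive Fm (P : Type) : Type
  | atom : P → Fm P
  | neg : Fm P → Fm P
  | conj : Fm P → Fm P → Fm P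
  | E : Fm P → Fm P
  | K : Fm P → Fm P

/-- Relational semantics: `E` is the box for `R`, `K` is the universal modality. -/
def relSat {X P : Type} (R : X → X → Prop) (v : P → Set X) : X → Fm P → Prop
  | x, Fm.atom p => x ∈ v p
  | x, Fm.neg φ => ¬ relSat R v x φ
  | x, Fm.conj φ ψ => relSat R v x φ ∧ relSat R v x ψ
  | x, Fm.E φ => ∀ y, R x y → relSat R v y φ
  | _, Fm.K φ => ∀ y, relSat R v y φ

/-- Evidence semantics for a single evidence state interpreted by `I`:
`(x,e) ⊨ Eφ` iff `I x ⊆ ⟦φ⟧^e = {y ∈ U_e | (y,e) ⊨ φ}`, and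
`(x,e) ⊨ Kφ` iff `U_e ⊆ ⟦φ⟧^e`, where `U_e = {y | y ∈ I y}`. -/
def evSat {X P : Type} (I : X → Set X) (v : P → Set X) : X → Fm P → Prop
  | x, Fm.atom p => x ∈ v p
  | x, Fm.neg φ => ¬ evSat I v x φ
  | x, Fm.conj φ ψ => evSat I v x φ ∧ evSat I v x ψ
  | x, Fm.E φ => ∀ y ∈ I x, y ∈ I y ∧ evSat I v y φ
  | _, Fm.K φ => ∀ y, y ∈ I y → evSat I v y φ

theorem evSat_iff_relSat_of_mem_self {X P : Type} {I : X → Set X} (v : P → Set X)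
    (hI : ∀ x, x ∈ I x) (φ : Fm P) (x : X) :
    evSat I v x φ ↔ relSat (fun x y => y ∈ I x) v x φ := by
  induction φ generalizing x with
  | atom p => rfl
  | neg φ ih => exact not_congr (ih x)
  | conj φ ψ ihφ ihψ => exact and_congr (ihφ x) (ihψ x)
  | E φ ih => exact forall₂_congr fun y _ => (and_iff_right (hI y)).trans (ih y)
  | K φ ih => exact forall_congr' fun y => (imp_iff_right (hI y)).trans (ih y)

/-- Every reflexive relational model is equivalent to a single-evidence-state
evidence model: setting `I x = {y | R x y}`, condition (E1) holds, `U_e = X`,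
and truth of every formula is preserved. -/
theorem relational_to_evidence {X P : Type} (R : X → X → Prop) (v : P → Set X)
    (hrefl : Reflexive R) :
    (∀ x y : X, y ∈ {z | R x z} → y ∈ {z | R y z}) ∧
    ({x : X | x ∈ {z | R x z}} = Set.univ) ∧
    (∀ (φ : Fm P) (x : X),
      relSat R v x φ ↔ evSat (fun x => {z | R x z}) v x φ) :=
  ⟨fun _ y _ => hrefl y, Set.eq_univ_of_forall hrefl,
    fun φ x => (evSat_iff_relSat_of_mem_self v hrefl φ x).symm⟩
end

section
/- In any evidence interaction model, the knowability modality □ validates the S4 axioms: (T) □φ → φ, (4) □φ → □□φ, and (K) □(φ→ψ) → (□φ → □ψ) hold at every evidence scenario (x,e). -/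
/-- `U_e = {x | x ∈ I_e(x)}`. -/
def Ue {X E : Type*} (I : E → X → Set X) (e : E) : Set X := {x | x ∈ I e x}

/-- The knowability modality: `(x,e) ⊨ □φ` iff there is `e'` with
`x ∈ U_{e ⊓ e'} ⊆ A`, where `A = ⟦φ⟧^e`. -/
def box {X E : Type*} [SemilatticeInf E] (I : E → X → Set X) (e : E)
    (A : Set X) (x : X) : Prop :=
  ∃ e' : E, x ∈ Ue I (e ⊓ e') ∧ Ue I (e ⊓ e') ⊆ A

section Knowability

variable {X E : Type*} [SemilatticeInf E] {I : E → X → Set X} {e : E} {A B : Set X} {x : X}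

theorem Ue_inf (hmeet : ∀ (e e' : E) (x : X), I (e ⊓ e') x = I e x ∩ I e' x) (a b : E) :
    Ue I (a ⊓ b) = Ue I a ∩ Ue I b := by
  ext y
  simp only [Ue, Set.mem_ofPred_eq, hmeet, Set.mem_inter_iff]

theorem box.mem (h : box I e A x) : x ∈ A :=
  let ⟨_, hx, hsub⟩ := h
  hsub hx

theorem box.mono (hAB : A ⊆ B) (h : box I e A x) : box I e B x :=
  let ⟨e', hx, hsub⟩ := h
  ⟨e', hx, hsub.trans hAB⟩

theorem box.inter (hmeet : ∀ (e e' : E) (x : X), I (e ⊓ e') x = I e x ∩ I e' x)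
    (hA : box I e A x) (hB : box I e B x) : box I e (A ∩ B) x := by
  obtain ⟨e₁, hx₁, hsub₁⟩ := hA
  obtain ⟨e₂, hx₂, hsub₂⟩ := hB
  have hU : Ue I (e ⊓ (e₁ ⊓ e₂)) = Ue I (e ⊓ e₁) ∩ Ue I (e ⊓ e₂) := by
    rw [inf_inf_distrib_left, Ue_inf hmeet]
  exact ⟨e₁ ⊓ e₂, hU ▸ ⟨hx₁, hx₂⟩, hU ▸ Set.inter_subset_inter hsub₁ hsub₂⟩

theorem box_box_of_box (hmeet : ∀ (e e' : E) (x : X), I (e ⊓ e') x = I e x ∩ I e' x)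
    (h : box I e A x) : box I e {y | y ∈ Ue I e ∧ box I e A y} x := by
  obtain ⟨e', hx, hsub⟩ := h
  refine ⟨e', hx, fun y hy => ⟨?_, e', hy, hsub⟩⟩
  rw [Ue_inf hmeet] at hy
  exact hy.1

theorem box.mp (hmeet : ∀ (e e' : E) (x : X), I (e ⊓ e') x = I e x ∩ I e' x)
    (himp : box I e ((Ue I e \ A) ∪ B) x) (hA : box I e A x) : box I e B x :=
  (box.inter hmeet himp hA).mono fun _ hy => hy.1.resolve_left fun hnA => hnA.2 hy.2

end Knowability

theorem box_is_S4_general {X E : Type*} [SemilatticeInf E] (I : E → X → Set X)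
    (hmeet : ∀ (e e' : E) (x : X), I (e ⊓ e') x = I e x ∩ I e' x)
    (e : E) (x : X)
    (A B : Set X) :
    -- (T) □φ → φ
    (box I e A x → x ∈ A) ∧
    -- (4) □φ → □□φ
    (box I e A x → box I e {y | y ∈ Ue I e ∧ box I e A y} x) ∧
    -- (K) □(φ→ψ) → (□φ → □ψ)
    (box I e ((Ue I e \ A) ∪ B) x → box I e A x → box I e B x) :=
  ⟨box.mem, box_box_of_box hmeet, box.mp hmeet⟩

/-- In any evidence interaction model, the knowability modality `□` validates
the S4 axioms (T), (4), and (K) at every evidence scenario `(x,e)`. Here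
`A = ⟦φ⟧^e ⊆ U_e` and `B = ⟦ψ⟧^e ⊆ U_e` are truth sets, `⟦□φ⟧^e =
{y ∈ U_e | box I e A y}` and `⟦φ→ψ⟧^e = (U_e \ A) ∪ B`. -/
theorem box_is_S4 {X E : Type*} [SemilatticeInf E] (I : E → X → Set X)
    (hE1 : ∀ (e : E) (x y : X), y ∈ I e x → y ∈ I e y)
    (hmeet : ∀ (e e' : E) (x : X), I (e ⊓ e') x = I e x ∩ I e' x)
    (e : E) (x : X) (hx : x ∈ Ue I e)
    (A B : Set X) (hA : A ⊆ Ue I e) (hB : B ⊆ Ue I e) :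
    -- (T) □φ → φ
    (box I e A x → x ∈ A) ∧
    -- (4) □φ → □□φ
    (box I e A x → box I e {y | y ∈ Ue I e ∧ box I e A y} x) ∧
    -- (K) □(φ→ψ) → (□φ → □ψ)
    (box I e ((Ue I e \ A) ∪ B) x → box I e A x → box I e B x) :=
  box_is_S4_general I hmeet e x A B
end
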